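/- For all n ≥ 0, the Padovan sequence satisfies P_{2n} = P_n^2 + 2 P_{n+1} P_{n+2} and P_{2n+1} = P_{n+2}^2 + P_{n+1} P_{n+3} + P_n P_{n+1}. -/
import Mathlib


def padovan : ℕ → ℕ
  | 0 => 1
  | 1 => 0
  | 2 => 0
  | (n + 3) => padovan (n + 1) + padovan n

lemma padovan_rec (n : ℕ) : padovan (n + 3) = padovan (n + 1) + padovan n := by
  simp [padovan]

lemma padovan_key (n : ℕ) :
    padovan (2 * n) = padovan n ^ 2 + 2 * padovan (n + 1) * padovan (n + 2) ∧
    padovan (2 * n + 1) =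
      padovan (n + 2) ^ 2 + padovan (n + 1) * padovan (n + 3) +
        padovan n * padovan (n + 1) ∧
    padovan (2 * (n + 1)) =
      padovan (n + 1) ^ 2 + 2 * padovan (n + 2) * padovan (n + 3) := by
  induction n with
  | zero => decide
  | succ n ih =>
    obtain ⟨hA, hB, hC⟩ := ih
    refine ⟨by rw [show 2 * (n + 1) = 2 * n + 2 by ring] at hC ⊢; exact hC, ?_, ?_⟩
    · have h1 : 2 * (n + 1) + 1 = (2 * n) + 3 := by ring
      rw [h1, padovan_rec, hA, hB,
        show n + 1 + 2 = n + 3 from rfl, show n + 1 + 3 = n + 1 + 3 from rfl,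
        show n + 1 + 1 = n + 2 from rfl, padovan_rec n, padovan_rec (n + 1)]
      ring
    · have h1 : 2 * (n + 1 + 1) = (2 * n + 1) + 3 := by ring
      have h2 : 2 * (n + 1) = 2 * n + 2 := by ring
      rw [h2] at hC
      rw [h1, padovan_rec, show 2 * n + 1 + 1 = 2 * n + 2 from rfl, hB, hC, show n + 1 + 1 = n + 2 from rfl, show n + 1 + 2 = n + 3 from rfl,
        padovan_rec n, padovan_rec (n + 1)]
      ring

theorem padovan_double (n : ℕ) :
    padovan (2 * n) = padovan n ^ 2 + 2 * padovan (n + 1) * padovan (n + 2) ∧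
    padovan (2 * n + 1) =
      padovan (n + 2) ^ 2 + padovan (n + 1) * padovan (n + 3) +
        padovan n * padovan (n + 1) := by
  exact ⟨(padovan_key n).1, (padovan_key n).2.1⟩
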